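/- In the graph with vertices ℕ × {0,1} where (n,i) and (m,j) are coherent iff i = j or n ≠ m, the finitary pseudocomplement of the observation x = {{(n,0)} | n ∈ ℕ} (computed within finite cliques) is empty, while its pseudocomplement in the full observation algebra is the down-closure of the single infinite clique {(n,1) | n ∈ ℕ}; hence the embedding of finitary observations into observations does not preserve pseudocomplements. -/

import Mathlib

/-- A set of vertices is a clique when its elements are pairwise coherent. -/
def IsClique {V : Type*} (coh : V → V → Prop) (x : Set V) : Prop :=
  ∀ a ∈ x, ∀ b ∈ x, coh a b

/-- The coherence space: the set of cliques of the graph. -/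
def Coh {V : Type*} (coh : V → V → Prop) : Set (Set V) :=
  {x | IsClique coh x}

/-- Down-closure (w.r.t. superset, within cliques) of a set of cliques. -/
def dcl {V : Type*} (coh : V → V → Prop) (x : Set (Set V)) : Set (Set V) :=
  {α | IsClique coh α ∧ ∃ β ∈ x, β ⊆ α}

/-- An observation: a down-closed set of cliques. -/
def IsObs {V : Type*} (coh : V → V → Prop) (x : Set (Set V)) : Prop :=
  x ⊆ Coh coh ∧ ∀ α β : Set V, β ∈ x → β ⊆ α → IsClique coh α → α ∈ x

/-- Heyting implication of sets of cliques. -/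
def oimpl {V : Type*} (coh : V → V → Prop) (x y : Set (Set V)) : Set (Set V) :=
  {α | IsClique coh α ∧ ∀ β ∈ x, IsClique coh (α ∪ β) → α ∪ β ∈ y}

/-- Finite cliques. -/
def Cohf {V : Type*} (coh : V → V → Prop) : Set (Set V) :=
  {x | IsClique coh x ∧ x.Finite}

/-- Down-closure within finite cliques. -/
def dclf {V : Type*} (coh : V → V → Prop) (x : Set (Set V)) : Set (Set V) :=
  {α | α ∈ Cohf coh ∧ ∃ β ∈ x, β ⊆ α}

/-- Finitary observation: a down-closed set of finite cliques. -/
def IsObsf {V : Type*} (coh : V → V → Prop) (x : Set (Set V)) : Prop :=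
  x ⊆ Cohf coh ∧ ∀ α β : Set V, β ∈ x → β ⊆ α → α ∈ Cohf coh → α ∈ x

/-- Finitary Heyting implication. -/
def oimplf {V : Type*} (coh : V → V → Prop) (x y : Set (Set V)) : Set (Set V) :=
  {α | α ∈ Cohf coh ∧ ∀ β ∈ x, α ∪ β ∈ Cohf coh → α ∪ β ∈ y}

/-- The graph on `ℕ × Bool` where `(n,i)` and `(m,j)` are coherent iff `i = j` or `n ≠ m`. -/
def cohG : ℕ × Bool → ℕ × Bool → Prop :=
  fun p q => p.2 = q.2 ∨ p.1 ≠ q.1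

/-!
In `cohG` the only vertex incoherent with `(n, false)` is `(n, true)`, so a clique `α` fails to
extend by the atom `{(n, false)}` exactly when `(n, true) ∈ α`. A clique orthogonal to every such
atom must therefore contain all of `ℕ × {true}`, which no finite clique does: the finitary
pseudocomplement is empty, while the full one consists of the cliques above the infinite clique
`ℕ × {true}`.
-/

namespace IsClique

variable {V : Type*} {coh : V → V → Prop}

theorem union_singleton_iff {α : Set V} {v : V} :
    IsClique coh (α ∪ {v}) ↔
      IsClique coh α ∧ coh v v ∧ ∀ a ∈ α, coh a v ∧ coh v a := by
  simp only [IsClique, Set.mem_union, Set.mem_singleton_iff]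
  constructor
  · intro h
    exact ⟨fun a ha b hb => h a (.inl ha) b (.inl hb), h v (.inr rfl) v (.inr rfl),
      fun a ha => ⟨h a (.inl ha) v (.inr rfl), h v (.inr rfl) a (.inl ha)⟩⟩
  · rintro ⟨hα, hv, hav⟩ a (ha | rfl) b (hb | rfl)
    exacts [hα a ha b hb, (hav a ha).1, (hav b hb).2, hv]

end IsClique

section Pseudocomplement

variable {V : Type*} {coh : V → V → Prop} {x : Set (Set V)} {α : Set V}

theorem mem_oimpl_empty_iff :
    α ∈ oimpl coh x ∅ ↔ IsClique coh α ∧ ∀ β ∈ x, ¬IsClique coh (α ∪ β) := by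
  simp [oimpl]

theorem mem_oimplf_empty_iff :
    α ∈ oimplf coh x ∅ ↔ α ∈ Cohf coh ∧ ∀ β ∈ x, α ∪ β ∉ Cohf coh := by
  simp [oimplf]

end Pseudocomplement

theorem dcl_empty {V : Type*} (coh : V → V → Prop) : dcl coh ∅ = ∅ := by
  simp [dcl]

theorem mem_dcl_singleton_iff {V : Type*} {coh : V → V → Prop} {γ α : Set V} :
    α ∈ dcl coh {γ} ↔ IsClique coh α ∧ γ ⊆ α := by
  simp [dcl]

namespace cohG

def falseAtoms : Set (Set (ℕ × Bool)) :=
  {s | ∃ n : ℕ, s = {(n, false)}}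

def trueCopy : Set (ℕ × Bool) :=
  {p | p.2 = true}

theorem refl (p : ℕ × Bool) : cohG p p :=
  .inl rfl

theorem comm {p q : ℕ × Bool} : cohG p q ↔ cohG q p := by
  simp only [cohG, eq_comm, ne_comm]

theorem with_false_iff {p : ℕ × Bool} {n : ℕ} : cohG p (n, false) ↔ p ≠ (n, true) := by
  obtain ⟨m, b⟩ := p
  cases b <;> simp [cohG]

theorem isClique_trueCopy : IsClique cohG trueCopy :=
  fun _ ha _ hb => .inl (ha.trans hb.symm)

theorem isClique_union_false_iff {α : Set (ℕ × Bool)} (hα : IsClique cohG α) (n : ℕ) :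
    IsClique cohG (α ∪ {(n, false)}) ↔ (n, true) ∉ α := by
  simp only [IsClique.union_singleton_iff, hα, refl, true_and, comm (p := (n, false)), and_self,
    with_false_iff]
  exact ⟨fun h hn => h _ hn rfl, fun h a ha hn => h (hn ▸ ha)⟩

theorem oimplf_falseAtoms_empty : oimplf cohG falseAtoms ∅ = ∅ := by
  refine Set.eq_empty_of_forall_notMem fun α hα => ?_
  obtain ⟨⟨hcl, hfin⟩, horth⟩ := mem_oimplf_empty_iff.mp hα
  obtain ⟨n, hn⟩ := (hfin.image Prod.fst).exists_notMem
  have hfresh : (n, true) ∉ α := fun hmem => hn ⟨_, hmem, rfl⟩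
  exact horth _ ⟨n, rfl⟩
    ⟨(isClique_union_false_iff hcl n).mpr hfresh, hfin.union (Set.finite_singleton _)⟩

theorem oimpl_falseAtoms_empty : oimpl cohG falseAtoms ∅ = dcl cohG {trueCopy} := by
  ext α
  simp only [mem_oimpl_empty_iff, mem_dcl_singleton_iff]
  refine and_congr_right fun hcl => ?_
  constructor
  · rintro horth ⟨n, b⟩ (rfl : b = true)
    exact not_not.mp ((isClique_union_false_iff hcl n).not.mp (horth _ ⟨n, rfl⟩))
  · rintro htrue _ ⟨n, rfl⟩
    exact (isClique_union_false_iff hcl n).not.mpr (not_not.mpr (htrue rfl))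

end cohG

open cohG in
theorem finitary_pseudocomplement_not_preserved :
    oimplf cohG {s : Set (ℕ × Bool) | ∃ n : ℕ, s = {(n, false)}} ∅ = ∅ ∧
    oimpl cohG {s : Set (ℕ × Bool) | ∃ n : ℕ, s = {(n, false)}} ∅ =
      dcl cohG {{p : ℕ × Bool | p.2 = true}} ∧
    dcl cohG (oimplf cohG {s : Set (ℕ × Bool) | ∃ n : ℕ, s = {(n, false)}} ∅) ≠
      oimpl cohG {s : Set (ℕ × Bool) | ∃ n : ℕ, s = {(n, false)}} ∅ := by
  refine ⟨oimplf_falseAtoms_empty, oimpl_falseAtoms_empty, ?_⟩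
  change dcl cohG (oimplf cohG falseAtoms ∅) ≠ oimpl cohG falseAtoms ∅
  rw [oimplf_falseAtoms_empty, oimpl_falseAtoms_empty, dcl_empty]
  exact (Set.nonempty_of_mem
    (mem_dcl_singleton_iff.mpr ⟨isClique_trueCopy, subset_rfl⟩)).ne_empty.symm
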